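/- arXiv:2009.06691 — 5 statements merged into one kernel-verified Lean document; each statement's English description precedes it below -/
import Mathlib

section
/- The number of subgroups of index n in ℤ³ equals ω(n) = Σ_{abc = n} a²b, where the sum is over ordered triples of positive integers with abc = n. -/
/-!
A subgroup `H` of `ℤ × G` is determined by the index `c` of its projection to `ℤ`, its slice
`K = {g | (0, g) ∈ H}` and the class `q ∈ G ⧸ K` of the `g` with `(c, g) ∈ H`; every triple
with `c ≠ 0` occurs, and `[ℤ × G : H] = c * [G : K]`. So the number of index-`n` subgroups of
`ℤ × G` is `∑_{d ∣ n} d * #{K ≤ G | [G : K] = d}`. Starting from one subgroup of each index in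
`ℤ`, this gives `σ n` subgroups of index `n` in `ℤ²` and `∑_{d ∣ n} d σ d` in `ℤ³`, which is
`ω n` after writing `d = a * b` and `n = d * c`.
-/

/-- `omegaFn n = ∑_{a*b*c = n} a² * b`, summing over ordered triples of positive integers. -/
def omegaFn (n : ℕ) : ℕ :=
  ∑ t ∈ (Finset.range (n+1) ×ˢ Finset.range (n+1) ×ˢ Finset.range (n+1)).filter
      (fun t => 0 < t.1 ∧ 0 < t.2.1 ∧ 0 < t.2.2 ∧ t.1 * t.2.1 * t.2.2 = n),
    t.1 ^ 2 * t.2.1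

open AddSubgroup ArithmeticFunction
open scoped ArithmeticFunction.sigma

theorem AddSubgroup.index_eq_index_map_mul_relIndex_ker {A B : Type*} [AddCommGroup A]
    [AddGroup B] {f : A →+ B} (hf : Function.Surjective f) (H : AddSubgroup A) :
    H.index = (H.map f).index * H.relIndex f.ker := by
  rw [← relIndex_mul_index (le_sup_left : H ≤ H ⊔ f.ker), relIndex_sup_left, ← comap_map_eq,
    index_comap_of_surjective _ hf, mul_comm]

theorem Int.eq_zmultiples_index (S : AddSubgroup ℤ) : S = zmultiples (S.index : ℤ) := by
  obtain ⟨a, rfl⟩ := Int.subgroup_cyclic S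
  rw [← zmultiples_eq_closure, Int.index_zmultiples, Int.zmultiples_natAbs]

theorem div_pos_of_mem_divisors {n d : ℕ} (hd : d ∈ n.divisors) : 0 < n / d :=
  Nat.div_pos (Nat.divisor_le hd) (Nat.pos_of_mem_divisors hd)

instance (d : ℕ) : Unique {S : AddSubgroup ℤ // S.index = d} where
  default := ⟨zmultiples (d : ℤ), by rw [Int.index_zmultiples, Int.natAbs_natCast]⟩
  uniq := fun ⟨S, hS⟩ => Subtype.ext (hS ▸ Int.eq_zmultiples_index S)

section ProdInt

variable {G : Type*} [AddCommGroup G]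

def cyclicPullback (c : ℕ) (K : AddSubgroup G) (q : G ⧸ K) : AddSubgroup (ℤ × G) :=
  (zmultiples ((c : ℤ), q)).comap ((AddMonoidHom.id ℤ).prodMap (QuotientAddGroup.mk' K))

theorem mem_cyclicPullback {c : ℕ} {K : AddSubgroup G} {q : G ⧸ K} {t : ℤ} {g : G} :
    (t, g) ∈ cyclicPullback c K q ↔ ∃ k : ℤ, k * c = t ∧ k • q = g := by
  simp [cyclicPullback, mem_zmultiples_iff]

noncomputable def fstIndex (H : AddSubgroup (ℤ × G)) : ℕ :=
  (H.map (AddMonoidHom.fst ℤ G)).index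

def zeroSlice (H : AddSubgroup (ℤ × G)) : AddSubgroup G := H.comap (AddMonoidHom.inr ℤ G)

theorem map_fst_eq_zmultiples_fstIndex (H : AddSubgroup (ℤ × G)) :
    H.map (AddMonoidHom.fst ℤ G) = zmultiples (fstIndex H : ℤ) :=
  Int.eq_zmultiples_index _

theorem exists_fstIndex_mem (H : AddSubgroup (ℤ × G)) :
    ∃ g : G, ((fstIndex H : ℤ), g) ∈ H := by
  obtain ⟨⟨t, g⟩, hH, rfl⟩ : (fstIndex H : ℤ) ∈ H.map (AddMonoidHom.fst ℤ G) := by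
    rw [map_fst_eq_zmultiples_fstIndex]
    exact mem_zmultiples _
  exact ⟨g, hH⟩

noncomputable def classAbove (H : AddSubgroup (ℤ × G)) : G ⧸ zeroSlice H :=
  (exists_fstIndex_mem H).choose

theorem mem_iff_exists_zsmul_classAbove (H : AddSubgroup (ℤ × G)) {t : ℤ} {g : G} :
    (t, g) ∈ H ↔ ∃ k : ℤ, k * fstIndex H = t ∧ k • classAbove H = g := by
  set g₀ := (exists_fstIndex_mem H).choose
  have hg₀ : ((fstIndex H : ℤ), g₀) ∈ H := (exists_fstIndex_mem H).choose_spec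
  have mem_iff : ∀ k : ℤ, (k * fstIndex H, g) ∈ H ↔ k • classAbove H = g := fun k =>
    calc (k * fstIndex H, g) ∈ H
        ↔ k • ((fstIndex H : ℤ), g₀) + (0, g - k • g₀) ∈ H := by simp
      _ ↔ (0, g - k • g₀) ∈ H := H.add_mem_cancel_left (H.zsmul_mem hg₀ k)
      _ ↔ k • classAbove H = g := by
          rw [classAbove, ← QuotientAddGroup.mk_zsmul, eq_comm, QuotientAddGroup.eq_iff_sub_mem]
          rfl
  constructor
  · intro h
    obtain ⟨k, hk⟩ := mem_zmultiples_iff.mp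
      (map_fst_eq_zmultiples_fstIndex H ▸ mem_map_of_mem (AddMonoidHom.fst ℤ G) h)
    rw [smul_eq_mul] at hk
    exact ⟨k, hk, (mem_iff k).mp (hk ▸ h)⟩
  · rintro ⟨k, rfl, hk⟩
    exact (mem_iff k).mpr hk

theorem cyclicPullback_fstIndex_zeroSlice_classAbove (H : AddSubgroup (ℤ × G)) :
    cyclicPullback (fstIndex H) (zeroSlice H) (classAbove H) = H := by
  ext ⟨t, g⟩
  rw [mem_cyclicPullback, mem_iff_exists_zsmul_classAbove]

theorem index_eq_fstIndex_mul_index_zeroSlice (H : AddSubgroup (ℤ × G)) :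
    H.index = fstIndex H * (zeroSlice H).index := by
  have : (AddMonoidHom.inr ℤ G).range = (AddMonoidHom.fst ℤ G).ker := by
    ext ⟨t, g⟩
    simp [eq_comm, mem_prod]
  rw [index_eq_index_map_mul_relIndex_ker (f := AddMonoidHom.fst ℤ G) Prod.fst_surjective,
    fstIndex, zeroSlice, index_comap, this]

theorem fstIndex_cyclicPullback (c : ℕ) (K : AddSubgroup G) (q : G ⧸ K) :
    fstIndex (cyclicPullback c K q) = c := by
  suffices (cyclicPullback c K q).map (AddMonoidHom.fst ℤ G) = zmultiples (c : ℤ) by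
    rw [fstIndex, this, Int.index_zmultiples, Int.natAbs_natCast]
  ext t
  constructor
  · rintro ⟨⟨t, g⟩, hH, rfl⟩
    obtain ⟨k, rfl, -⟩ := mem_cyclicPullback.mp hH
    exact mem_zmultiples_iff.mpr ⟨k, rfl⟩
  · rintro ⟨k, rfl⟩
    obtain ⟨g, hg⟩ := QuotientAddGroup.mk_surjective (k • q)
    exact ⟨(k • (c : ℤ), g), mem_cyclicPullback.mpr ⟨k, rfl, hg.symm⟩, rfl⟩

theorem zeroSlice_cyclicPullback {c : ℕ} (hc : c ≠ 0) (K : AddSubgroup G) (q : G ⧸ K) :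
    zeroSlice (cyclicPullback c K q) = K := by
  ext g
  change (0, g) ∈ cyclicPullback c K q ↔ g ∈ K
  simp [mem_cyclicPullback, hc, eq_comm (a := (0 : G ⧸ K))]

theorem cyclicPullback_injective {c : ℕ} (hc : c ≠ 0) (K : AddSubgroup G) :
    Function.Injective (cyclicPullback c K) := by
  intro q q' h
  obtain ⟨g, rfl⟩ := QuotientAddGroup.mk_surjective q
  have : ((c : ℤ), g) ∈ cyclicPullback c K q' := h ▸ mem_cyclicPullback.mpr ⟨1, by simp⟩
  obtain ⟨k, hk, hq'⟩ := mem_cyclicPullback.mp this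
  obtain rfl : k = 1 := by simpa [hc] using hk
  simpa using hq'.symm

theorem index_cyclicPullback {c : ℕ} (hc : c ≠ 0) (K : AddSubgroup G) (q : G ⧸ K) :
    (cyclicPullback c K q).index = c * K.index := by
  rw [index_eq_fstIndex_mul_index_zeroSlice, fstIndex_cyclicPullback, zeroSlice_cyclicPullback hc]

variable (G) in
abbrev IndexTriple (n : ℕ) : Type _ :=
  Σ d : n.divisors, Σ K : {K : AddSubgroup G // K.index = d}, G ⧸ K.1

noncomputable def indexTripleEquiv {n : ℕ} (hn : n ≠ 0) :
    IndexTriple G n ≃ {H : AddSubgroup (ℤ × G) // H.index = n} := by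
  refine Equiv.ofBijective (fun x => ⟨cyclicPullback (n / x.1) x.2.1 x.2.2, ?_⟩) ⟨?_, ?_⟩
  · rw [index_cyclicPullback (div_pos_of_mem_divisors x.1.2).ne', x.2.1.2,
      Nat.div_mul_cancel (Nat.dvd_of_mem_divisors x.1.2)]
  · rintro ⟨⟨d, hd⟩, ⟨K, hK⟩, q⟩ ⟨⟨d', hd'⟩, ⟨K', hK'⟩, q'⟩ h
    have h : cyclicPullback (n / d) K q = cyclicPullback (n / d') K' q' := congrArg Subtype.val h
    obtain rfl : d = d' := by
      have := congrArg fstIndex h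
      rw [fstIndex_cyclicPullback, fstIndex_cyclicPullback] at this
      rw [← Nat.div_div_self (Nat.dvd_of_mem_divisors hd) hn, this,
        Nat.div_div_self (Nat.dvd_of_mem_divisors hd') hn]
    have hc := (div_pos_of_mem_divisors hd).ne'
    obtain rfl : K = K' := by
      simpa only [zeroSlice_cyclicPullback hc] using congrArg zeroSlice h
    obtain rfl : q = q' := cyclicPullback_injective hc K h
    rfl
  · rintro ⟨H, hH⟩
    have hindex := index_eq_fstIndex_mul_index_zeroSlice H
    have hd : (zeroSlice H).index ∈ n.divisors :=
      Nat.mem_divisors.mpr ⟨Dvd.intro_left _ (hindex ▸ hH), hn⟩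
    refine ⟨⟨⟨_, hd⟩, ⟨zeroSlice H, rfl⟩, classAbove H⟩, Subtype.ext ?_⟩
    change cyclicPullback (n / (zeroSlice H).index) (zeroSlice H) (classAbove H) = H
    rw [← hH, hindex, Nat.mul_div_cancel _ (Nat.pos_of_mem_divisors hd),
      cyclicPullback_fstIndex_zeroSlice_classAbove]

end ProdInt

section Counting

variable {G : Type*} [AddCommGroup G]

theorem finite_quotient_of_index_eq {d : ℕ} (hd : d ≠ 0)
    (K : {K : AddSubgroup G // K.index = d}) :
    Finite (G ⧸ K.1) :=
  index_ne_zero_iff_finite.mp (K.2.symm ▸ hd)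

theorem card_sigma_quotient_of_index_eq {d : ℕ} (hd : d ≠ 0)
    [Finite {K : AddSubgroup G // K.index = d}] :
    Nat.card (Σ K : {K : AddSubgroup G // K.index = d}, G ⧸ K.1) =
      Nat.card {K : AddSubgroup G // K.index = d} * d := by
  have := finite_quotient_of_index_eq (G := G) hd
  have := Fintype.ofFinite {K : AddSubgroup G // K.index = d}
  rw [Nat.card_sigma]
  simp_rw [← index_eq_card]
  rw [Finset.sum_congr rfl fun K _ => K.2, Finset.sum_const, Finset.card_univ,
    Nat.card_eq_fintype_card, smul_eq_mul]

theorem finite_subgroup_index_eq_int_prod 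
    (hfin : ∀ d ≠ 0, Finite {K : AddSubgroup G // K.index = d}) {n : ℕ} (hn : n ≠ 0) :
    Finite {H : AddSubgroup (ℤ × G) // H.index = n} := by
  have (d : n.divisors) := hfin d (Nat.pos_of_mem_divisors d.2).ne'
  have (d : n.divisors) := finite_quotient_of_index_eq (G := G) (Nat.pos_of_mem_divisors d.2).ne'
  exact Finite.of_equiv _ (indexTripleEquiv hn)

theorem card_subgroup_index_eq_int_prod 
    (hfin : ∀ d ≠ 0, Finite {K : AddSubgroup G // K.index = d}) {n : ℕ} (hn : n ≠ 0) :
    Nat.card {H : AddSubgroup (ℤ × G) // H.index = n} =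
      ∑ d ∈ n.divisors, Nat.card {K : AddSubgroup G // K.index = d} * d := by
  have (d : n.divisors) := hfin d (Nat.pos_of_mem_divisors d.2).ne'
  have (d : n.divisors) := finite_quotient_of_index_eq (G := G) (Nat.pos_of_mem_divisors d.2).ne'
  rw [← Nat.card_congr (indexTripleEquiv hn), Nat.card_sigma, ← Finset.sum_coe_sort n.divisors]
  exact Finset.sum_congr rfl fun d _ =>
    card_sigma_quotient_of_index_eq (Nat.pos_of_mem_divisors d.2).ne'

end Counting

theorem omegaFn_eq_sum_divisors (n : ℕ) : omegaFn n = ∑ d ∈ n.divisors, σ 1 d * d := by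
  simp_rw [sigma_one_apply, Finset.sum_mul]
  rw [Finset.sum_sigma', omegaFn]
  refine Finset.sum_nbij' (fun t => ⟨t.1 * t.2.1, t.1⟩) (fun p => (p.2, p.1 / p.2, n / p.1))
    ?_ ?_ ?_ ?_ ?_
  · rintro ⟨a, b, c⟩ ht
    obtain ⟨-, ha, hb, hc, rfl⟩ := Finset.mem_filter.mp ht
    simp only [Finset.mem_sigma, Nat.mem_divisors]
    exact ⟨⟨Dvd.intro c rfl, by positivity⟩, Dvd.intro b rfl, by positivity⟩
  · rintro ⟨d, b⟩ hp
    obtain ⟨hd, hb⟩ : d ∈ n.divisors ∧ b ∈ d.divisors := Finset.mem_sigma.mp hp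
    have := Nat.divisor_le hd
    have := Nat.divisor_le hb
    have := Nat.div_le_self d b
    have := Nat.div_le_self n d
    simp only [Finset.mem_filter, Finset.mem_product, Finset.mem_range]
    refine ⟨⟨by omega, by omega, by omega⟩, Nat.pos_of_mem_divisors hb,
      div_pos_of_mem_divisors hb, div_pos_of_mem_divisors hd, ?_⟩
    rw [Nat.mul_div_cancel' (Nat.dvd_of_mem_divisors hb),
      Nat.mul_div_cancel' (Nat.dvd_of_mem_divisors hd)]
  · rintro ⟨a, b, c⟩ ht
    obtain ⟨-, ha, hb, -, rfl⟩ := Finset.mem_filter.mp ht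
    simp [ha, hb]
  · rintro ⟨d, b⟩ hp
    simp [Nat.mul_div_cancel' (Nat.dvd_of_mem_divisors (Finset.mem_sigma.mp hp).2)]
  · rintro ⟨a, b, c⟩ -
    ring

theorem card_subgroup_index_eq_int_prod_int {m : ℕ} (hm : m ≠ 0) :
    Nat.card {K : AddSubgroup (ℤ × ℤ) // K.index = m} = σ 1 m := by
  simp [card_subgroup_index_eq_int_prod (fun _ _ => inferInstance) hm, sigma_one_apply]

theorem stmt3 (n : ℕ) (hn : 0 < n) :
    Nat.card {H : AddSubgroup (ℤ × ℤ × ℤ) // H.index = n} = omegaFn n := by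
  rw [card_subgroup_index_eq_int_prod (fun m hm => finite_subgroup_index_eq_int_prod
    (fun _ _ => inferInstance) hm) hn.ne', omegaFn_eq_sum_divisors]
  exact Finset.sum_congr rfl fun d hd => by
    rw [card_subgroup_index_eq_int_prod_int (Nat.pos_of_mem_divisors hd).ne']
end

section
/- Let ℓ : ℤ² → ℤ² be the automorphism ℓ(u,v) = (u,-v). The number of subgroups Δ of index n in ℤ² with ℓ(Δ) = Δ equals σ₀(n) + σ₀(n/2), where σ₀(m) counts the divisors of m and σ₀(n/2) = 0 if n is odd. -/
set_option maxHeartbeats 1000000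

def ell2 : ℤ × ℤ →+ ℤ × ℤ := (AddMonoidHom.id ℤ).prodMap (negAddMonoidHom)

namespace Stmt4

def Hgrp (b a c : ℤ) : AddSubgroup (ℤ × ℤ) := AddSubgroup.closure {(b, c), (0, a)}

lemma mem_Hgrp {b a c x y : ℤ} :
    (x, y) ∈ Hgrp b a c ↔ ∃ k m : ℤ, x = k * b ∧ y = k * c + m * a := by
  rw [Hgrp, AddSubgroup.mem_closure_pair]
  constructor
  · rintro ⟨k, m, h⟩
    refine ⟨k, m, ?_, ?_⟩ <;>
    · have := congrArg Prod.fst h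
      have := congrArg Prod.snd h
      simp_all [Prod.ext_iff, zsmul_eq_mul, mul_comm]
  · rintro ⟨k, m, h1, h2⟩
    exact ⟨k, m, by simp [Prod.ext_iff, zsmul_eq_mul, h1, h2, mul_comm]⟩

lemma ell2_apply (p : ℤ × ℤ) : ell2 p = (p.1, -p.2) := rfl

lemma mem_map_ell2 {H : AddSubgroup (ℤ × ℤ)} {x y : ℤ} :
    (x, y) ∈ H.map ell2 ↔ (x, -y) ∈ H := by
  rw [AddSubgroup.mem_map]
  constructor
  · rintro ⟨⟨x', y'⟩, hm, heq⟩
    rw [ell2_apply, Prod.ext_iff] at heq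
    obtain ⟨h1, h2⟩ := heq
    simp only at h1 h2
    subst h1
    have : y' = -y := by omega
    subst this; exact hm
  · intro h
    exact ⟨(x, -y), h, by simp [ell2_apply]⟩

lemma Hgrp_neg_mem {b a c x y : ℤ} (hc : c = 0 ∨ 2 * c = a)
    (h : (x, y) ∈ Hgrp b a c) : (x, -y) ∈ Hgrp b a c := by
  rw [mem_Hgrp] at h ⊢
  obtain ⟨k, m, h1, h2⟩ := h
  rcases hc with rfl | hc
  · exact ⟨k, -m, h1, by rw [h2]; ring⟩
  · exact ⟨k, -k - m, h1, by rw [h2]; linear_combination (-k) * hc⟩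

lemma map_ell2_Hgrp {b a c : ℤ} (hc : c = 0 ∨ 2 * c = a) :
    (Hgrp b a c).map ell2 = Hgrp b a c := by
  ext ⟨x, y⟩
  rw [mem_map_ell2]
  constructor
  · intro h
    have := Hgrp_neg_mem hc h
    simpa using this
  · exact Hgrp_neg_mem hc

lemma zero_fst_mem_Hgrp {b a c : ℤ} (hb : b ≠ 0) {y : ℤ} :
    (0, y) ∈ Hgrp b a c ↔ a ∣ y := by
  rw [mem_Hgrp]
  constructor
  · rintro ⟨k, m, h1, h2⟩
    have hk : k = 0 := by
      rcases mul_eq_zero.mp h1.symm with h | h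
      · exact h
      · exact absurd h hb
    subst hk
    exact ⟨m, by linarith⟩
  · rintro ⟨m, rfl⟩
    exact ⟨0, m, by ring, by ring⟩

lemma exists_snd_Hgrp {b a c x : ℤ} :
    (∃ y, (x, y) ∈ Hgrp b a c) ↔ b ∣ x := by
  constructor
  · rintro ⟨y, hy⟩
    rw [mem_Hgrp] at hy
    obtain ⟨k, m, h1, _⟩ := hy
    exact ⟨k, by rw [h1]; ring⟩
  · rintro ⟨k, rfl⟩
    exact ⟨k * c, mem_Hgrp.mpr ⟨k, 0, by ring, by ring⟩⟩

lemma base_not_mem_Hgrp {b a c : ℤ} (hb : b ≠ 0) (ha : 0 < a) (hc : 2 * c = a) :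
    (b, 0) ∉ Hgrp b a c := by
  rw [mem_Hgrp]
  rintro ⟨k, m, h1, h2⟩
  have hk : k = 1 := by
    have : (k - 1) * b = 0 := by linarith
    rcases mul_eq_zero.mp this with h | h
    · omega
    · exact absurd h hb
  subst hk
  have : a * (1 + 2 * m) = 0 := by linear_combination (-2) * h2 - hc
  rcases mul_eq_zero.mp this with h | h
  · omega
  · omega

lemma index_Hgrp (b a : ℕ) (hb : 0 < b) (ha : 0 < a) (c : ℤ) :
    (Hgrp b a c).index = b * a := by
  have : NeZero b := ⟨hb.ne'⟩
  have : NeZero a := ⟨ha.ne'⟩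
  rw [AddSubgroup.index]
  have e : (ZMod b × ZMod a) ≃ ((ℤ × ℤ) ⧸ Hgrp (b : ℤ) (a : ℤ) c) := by
    apply Equiv.ofBijective
      (fun p => QuotientAddGroup.mk ((p.1.val : ℤ), (p.2.val : ℤ)))
    constructor
    · rintro ⟨u1, v1⟩ ⟨u2, v2⟩ h
      rw [QuotientAddGroup.eq] at h
      have h' : ((-(u1.val : ℤ) + u2.val), (-(v1.val : ℤ) + v2.val)) ∈
          Hgrp (b : ℤ) (a : ℤ) c := h
      rw [mem_Hgrp] at h'
      obtain ⟨k, m, h1, h2⟩ := h'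
      have hu1 := ZMod.val_lt u1
      have hu2 := ZMod.val_lt u2
      have hv1 := ZMod.val_lt v1
      have hv2 := ZMod.val_lt v2
      have B1 : (u1.val : ℤ) < b := by exact_mod_cast hu1
      have B2 : (u2.val : ℤ) < b := by exact_mod_cast hu2
      have B3 : (v1.val : ℤ) < a := by exact_mod_cast hv1
      have B4 : (v2.val : ℤ) < a := by exact_mod_cast hv2
      have N1 : (0:ℤ) ≤ u1.val := Int.natCast_nonneg _
      have N2 : (0:ℤ) ≤ u2.val := Int.natCast_nonneg _
      have N3 : (0:ℤ) ≤ v1.val := Int.natCast_nonneg _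
      have N4 : (0:ℤ) ≤ v2.val := Int.natCast_nonneg _
      have hbz : (0:ℤ) < b := by exact_mod_cast hb
      have haz : (0:ℤ) < a := by exact_mod_cast ha
      have hk : k = 0 := by
        rcases lt_trichotomy k 0 with hh | hh | hh
        · nlinarith [mul_le_mul_of_nonneg_right (show k ≤ -1 by omega) hbz.le]
        · exact hh
        · nlinarith [mul_le_mul_of_nonneg_right (show 1 ≤ k by omega) hbz.le]
      subst hk
      simp only [zero_mul, zero_add] at h1 h2
      have hm : m = 0 := by
        rcases lt_trichotomy m 0 with hh | hh | hh
        · nlinarith [mul_le_mul_of_nonneg_right (show m ≤ -1 by omega) haz.le]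
        · exact hh
        · nlinarith [mul_le_mul_of_nonneg_right (show 1 ≤ m by omega) haz.le]
      subst hm
      simp only [zero_mul, zero_add] at h2
      have e1 : u1 = u2 := ZMod.val_injective _ (by omega)
      have e2 : v1 = v2 := ZMod.val_injective _ (by omega)
      rw [e1, e2]
    · rintro ⟨⟨x, y⟩⟩
      set u : ZMod b := (x : ZMod b) with hu
      have hdu : (b : ℤ) ∣ x - u.val := by
        rw [← ZMod.intCast_zmod_eq_zero_iff_dvd]
        push_cast
        simp [hu, ZMod.intCast_cast, ZMod.natCast_val]
      obtain ⟨k, hk⟩ := hdu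
      set v : ZMod a := ((y - k * c : ℤ) : ZMod a) with hv
      have hdv : (a : ℤ) ∣ (y - k * c) - v.val := by
        rw [← ZMod.intCast_zmod_eq_zero_iff_dvd]
        push_cast
        simp [hv, ZMod.intCast_cast, ZMod.natCast_val]
      obtain ⟨m, hm⟩ := hdv
      refine ⟨(u, v), QuotientAddGroup.eq.mpr ?_⟩
      show ((-(u.val : ℤ) + x), (-(v.val : ℤ) + y)) ∈ Hgrp (b : ℤ) (a : ℤ) c
      rw [mem_Hgrp]
      exact ⟨k, m, by linarith [hk], by linarith [hm]⟩
  rw [← Nat.card_congr e, Nat.card_prod, Nat.card_zmod, Nat.card_zmod]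

lemma Hgrp_inj {b1 a1 b2 a2 : ℕ} {c1 c2 : ℤ} (hb1 : 0 < b1) (ha1 : 0 < a1)
    (hb2 : 0 < b2) (ha2 : 0 < a2)
    (hc1 : c1 = 0 ∨ 2 * c1 = (a1 : ℤ)) (hc2 : c2 = 0 ∨ 2 * c2 = (a2 : ℤ))
    (h : Hgrp b1 a1 c1 = Hgrp b2 a2 c2) : b1 = b2 ∧ a1 = a2 ∧ c1 = c2 := by
  have hbz1 : (b1 : ℤ) ≠ 0 := by exact_mod_cast hb1.ne'
  have hbz2 : (b2 : ℤ) ≠ 0 := by exact_mod_cast hb2.ne'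
  have haz1 : (0:ℤ) < a1 := by exact_mod_cast ha1
  have haz2 : (0:ℤ) < a2 := by exact_mod_cast ha2
  -- a1 = a2
  have ha12 : a1 = a2 := by
    have m1 : ((0:ℤ), (a1:ℤ)) ∈ Hgrp b1 a1 c1 := mem_Hgrp.mpr ⟨0, 1, by ring, by ring⟩
    have m2 : ((0:ℤ), (a2:ℤ)) ∈ Hgrp b2 a2 c2 := mem_Hgrp.mpr ⟨0, 1, by ring, by ring⟩
    rw [h] at m1; rw [← h] at m2
    have d1 : (a2:ℤ) ∣ a1 := (zero_fst_mem_Hgrp hbz2).mp m1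
    have d2 : (a1:ℤ) ∣ a2 := (zero_fst_mem_Hgrp hbz1).mp m2
    exact Nat.dvd_antisymm (by exact_mod_cast d2) (by exact_mod_cast d1)
  -- b1 = b2
  have hb12 : b1 = b2 := by
    have m1 : ((b1:ℤ), c1) ∈ Hgrp b1 a1 c1 := mem_Hgrp.mpr ⟨1, 0, by ring, by ring⟩
    have m2 : ((b2:ℤ), c2) ∈ Hgrp b2 a2 c2 := mem_Hgrp.mpr ⟨1, 0, by ring, by ring⟩
    rw [h] at m1; rw [← h] at m2
    have d1 : (b2:ℤ) ∣ b1 := exists_snd_Hgrp.mp ⟨c1, m1⟩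
    have d2 : (b1:ℤ) ∣ b2 := exists_snd_Hgrp.mp ⟨c2, m2⟩
    exact Nat.dvd_antisymm (by exact_mod_cast d2) (by exact_mod_cast d1)
  subst ha12; subst hb12
  refine ⟨rfl, rfl, ?_⟩
  rcases hc1 with rfl | hc1 <;> rcases hc2 with rfl | hc2
  · rfl
  · exfalso
    have m1 : ((b1:ℤ), (0:ℤ)) ∈ Hgrp b1 a1 0 := mem_Hgrp.mpr ⟨1, 0, by ring, by ring⟩
    rw [h] at m1
    exact base_not_mem_Hgrp hbz1 haz1 hc2 m1
  · exfalso
    have m2 : ((b1:ℤ), (0:ℤ)) ∈ Hgrp b1 a1 0 := mem_Hgrp.mpr ⟨1, 0, by ring, by ring⟩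
    rw [← h] at m2
    exact base_not_mem_Hgrp hbz1 haz1 hc1 m2
  · omega

lemma classify {H : AddSubgroup (ℤ × ℤ)} (hfin : H.index ≠ 0)
    (hmap : H.map ell2 = H) :
    ∃ (b a : ℕ) (c : ℤ), 0 < b ∧ 0 < a ∧ (c = 0 ∨ 2 * c = (a : ℤ)) ∧
      H = Hgrp b a c := by
  rw [AddSubgroup.index] at hfin
  have hFin : Finite ((ℤ × ℤ) ⧸ H) := (Nat.card_ne_zero.mp hfin).2
  -- the subgroup of second coordinates over 0
  obtain ⟨a0, hA⟩ := Int.subgroup_cyclic (H.comap (AddMonoidHom.inr ℤ ℤ))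
  have hAy : ∀ y : ℤ, ((0:ℤ), y) ∈ H ↔ a0 ∣ y := by
    intro y
    have : ((0:ℤ), y) ∈ H ↔ y ∈ H.comap (AddMonoidHom.inr ℤ ℤ) := Iff.rfl
    rw [this, hA, AddSubgroup.mem_closure_singleton]
    constructor
    · rintro ⟨t, ht⟩; exact ⟨t, by rw [← ht, zsmul_eq_mul, Int.cast_id]; ring⟩
    · rintro ⟨t, ht⟩; exact ⟨t, by rw [zsmul_eq_mul, Int.cast_id, ht]; ring⟩
  have ha0 : a0 ≠ 0 := by
    rintro rfl
    have hinj : Function.Injective (fun y : ℤ => (QuotientAddGroup.mk ((0:ℤ), y) : (ℤ × ℤ) ⧸ H)) := by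
      intro y1 y2 hq
      have := QuotientAddGroup.eq.mp hq
      have h0 : ((0:ℤ), -y1 + y2) ∈ H := this
      have := (hAy _).mp h0
      omega
    haveI := Finite.of_injective _ hinj
    exact not_finite ℤ
  -- the subgroup of first coordinates
  obtain ⟨b0, hB⟩ := Int.subgroup_cyclic (H.map (AddMonoidHom.fst ℤ ℤ))
  have hBx : ∀ x : ℤ, (∃ y, (x, y) ∈ H) ↔ b0 ∣ x := by
    intro x
    have hmm : x ∈ H.map (AddMonoidHom.fst ℤ ℤ) ↔ ∃ y, (x, y) ∈ H := by
      rw [AddSubgroup.mem_map]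
      constructor
      · rintro ⟨⟨x', y'⟩, hm, heq⟩
        have : x' = x := heq
        subst this
        exact ⟨y', hm⟩
      · rintro ⟨y, hy⟩
        exact ⟨(x, y), hy, rfl⟩
    rw [← hmm, hB, AddSubgroup.mem_closure_singleton]
    constructor
    · rintro ⟨t, ht⟩; exact ⟨t, by rw [← ht, zsmul_eq_mul, Int.cast_id]; ring⟩
    · rintro ⟨t, ht⟩; exact ⟨t, by rw [zsmul_eq_mul, Int.cast_id, ht]; ring⟩
  have hb0 : b0 ≠ 0 := by
    rintro rfl
    have hinj : Function.Injective (fun x : ℤ => (QuotientAddGroup.mk (x, (0:ℤ)) : (ℤ × ℤ) ⧸ H)) := by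
      intro x1 x2 hq
      have := QuotientAddGroup.eq.mp hq
      have h0 : ((-x1 + x2 : ℤ), (0:ℤ)) ∈ H := this
      have := (hBx _).mp ⟨0, h0⟩
      omega
    haveI := Finite.of_injective _ hinj
    exact not_finite ℤ
  set a : ℕ := a0.natAbs with haDef
  set b : ℕ := b0.natAbs with hbDef
  have ha : 0 < a := Int.natAbs_pos.mpr ha0
  have hb : 0 < b := Int.natAbs_pos.mpr hb0
  have hAy' : ∀ y : ℤ, ((0:ℤ), y) ∈ H ↔ (a : ℤ) ∣ y := by
    intro y; rw [hAy, haDef, Int.natAbs_dvd]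
  have hBx' : ∀ x : ℤ, (∃ y, (x, y) ∈ H) ↔ (b : ℤ) ∣ x := by
    intro x; rw [hBx, hbDef, Int.natAbs_dvd]
  -- pick c₀ with (b, c₀) ∈ H
  obtain ⟨c₀, hc₀⟩ := (hBx' b).mpr dvd_rfl
  -- ℓ-invariance
  have hneg : ((b:ℤ), -c₀) ∈ H := by
    have : ell2 ((b:ℤ), c₀) ∈ H.map ell2 := AddSubgroup.mem_map_of_mem _ hc₀
    rw [hmap] at this
    exact this
  have h2c : (a : ℤ) ∣ 2 * c₀ := by
    have hsub : (((b:ℤ) - b), (c₀ - -c₀)) ∈ H := sub_mem hc₀ hneg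
    have : ((0:ℤ), 2 * c₀) ∈ H := by
      have h1 : ((b:ℤ) - b) = 0 := by ring
      have h2 : (c₀ - -c₀) = 2 * c₀ := by ring
      rwa [h1, h2] at hsub
    exact (hAy' _).mp this
  -- choose c
  obtain ⟨t, ht⟩ := h2c
  have key : ∃ c : ℤ, (c = 0 ∨ 2 * c = (a:ℤ)) ∧ (a : ℤ) ∣ c₀ - c := by
    rcases Int.even_or_odd t with ⟨s, hs⟩ | ⟨s, hs⟩
    · refine ⟨0, Or.inl rfl, ⟨s, ?_⟩⟩
      have h2 : 2 * (c₀ - 0 - (a:ℤ) * s) = 0 := by linear_combination ht + (a:ℤ) * hs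
      rcases mul_eq_zero.mp h2 with h | h
      · norm_num at h
      · linarith
    · refine ⟨c₀ - s * a, Or.inr (by rw [hs] at ht; linarith), ⟨s, by ring⟩⟩
  obtain ⟨c, hcOr, hcMod⟩ := key
  refine ⟨b, a, c, hb, ha, hcOr, ?_⟩
  apply le_antisymm
  · -- H ⊆ Hgrp
    rintro ⟨x, y⟩ hxy
    obtain ⟨k, hk⟩ := (hBx' x).mp ⟨y, hxy⟩
    have hmem : ((k * b : ℤ), k * c₀) ∈ H := by
      have h' : k • ((b:ℤ), c₀) ∈ H := zsmul_mem hc₀ k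
      have : k • ((b:ℤ), c₀) = ((k * b : ℤ), k * c₀) := by
        simp [Prod.ext_iff, smul_eq_mul]
      rwa [this] at h'
    have hdiff : ((0:ℤ), y - k * c₀) ∈ H := by
      have hsub := sub_mem hxy hmem
      have h1 : (x - k * b : ℤ) = 0 := by rw [hk]; ring
      have : ((x - k * b : ℤ), y - k * c₀) ∈ H := hsub
      rwa [h1] at this
    obtain ⟨m, hm⟩ := (hAy' _).mp hdiff
    obtain ⟨d, hd⟩ := hcMod
    rw [mem_Hgrp]
    exact ⟨k, k * d + m, by rw [hk]; ring, by linear_combination k * hd + hm⟩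
  · -- Hgrp ⊆ H
    rw [Hgrp]
    rw [AddSubgroup.closure_le]
    rintro p (rfl | rfl)
    · -- (b, c) ∈ H
      have hmod : ((0:ℤ), c₀ - c) ∈ H := (hAy' _).mpr hcMod
      have h3 : (((b:ℤ) - 0), (c₀ - (c₀ - c))) ∈ H := sub_mem hc₀ hmod
      have e1 : (b:ℤ) - 0 = b := sub_zero _
      have e2 : c₀ - (c₀ - c) = c := by ring
      rw [e1, e2] at h3
      exact h3
    · exact (hAy' _).mpr dvd_rfl


def cval (a : ℕ) (f : Bool) : ℤ := if f then ((a / 2 : ℕ) : ℤ) else 0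

lemma cval_spec {a : ℕ} {f : Bool} (h : f = true → 2 ∣ a) :
    cval a f = 0 ∨ 2 * cval a f = (a : ℤ) := by
  cases f
  · exact Or.inl rfl
  · right
    have h2 := h rfl
    simp only [cval, if_true]
    omega

abbrev Param (n : ℕ) : Type :=
  {p : (ℕ × ℕ) × Bool // p.1.1 * p.1.2 = n ∧ (p.2 = true → 2 ∣ p.1.2)}

lemma param_pos {n : ℕ} (hn : 0 < n) (p : Param n) :
    0 < p.1.1.1 ∧ 0 < p.1.1.2 := by
  have hmul := p.2.1
  constructor
  · rcases Nat.eq_zero_or_pos p.1.1.1 with h | h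
    · rw [h, zero_mul] at hmul; omega
    · exact h
  · rcases Nat.eq_zero_or_pos p.1.1.2 with h | h
    · rw [h, mul_zero] at hmul; omega
    · exact h

def toH (n : ℕ) (hn : 0 < n) (p : Param n) :
    {H : AddSubgroup (ℤ × ℤ) // H.index = n ∧ H.map ell2 = H} :=
  ⟨Hgrp p.1.1.1 p.1.1.2 (cval p.1.1.2 p.1.2), by
    obtain ⟨hb, ha⟩ := param_pos hn p
    refine ⟨?_, map_ell2_Hgrp (cval_spec p.2.2)⟩
    rw [index_Hgrp _ _ hb ha]
    exact p.2.1⟩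

lemma toH_bijective (n : ℕ) (hn : 0 < n) : Function.Bijective (toH n hn) := by
  constructor
  · intro p q h
    have hval : Hgrp p.1.1.1 p.1.1.2 (cval p.1.1.2 p.1.2) =
        Hgrp q.1.1.1 q.1.1.2 (cval q.1.1.2 q.1.2) := congrArg Subtype.val h
    obtain ⟨hpb, hpa⟩ := param_pos hn p
    obtain ⟨hqb, hqa⟩ := param_pos hn q
    obtain ⟨hb, ha, hc⟩ := Hgrp_inj hpb hpa hqb hqa
      (cval_spec p.2.2) (cval_spec q.2.2) hval
    have hf : p.1.2 = q.1.2 := by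
      rcases hfp : p.1.2 with _ | _ <;> rcases hfq : q.1.2 with _ | _
      · rfl
      · exfalso
        have h2 := q.2.2 hfq
        rw [hfp, hfq] at hc
        simp only [cval] at hc
        norm_num at hc
        omega
      · exfalso
        have h2 := p.2.2 hfp
        rw [hfp, hfq] at hc
        simp only [cval] at hc
        norm_num at hc
        rw [ha] at hc hpa
        omega
      · rfl
    apply Subtype.ext
    exact Prod.ext (Prod.ext hb ha) hf
  · rintro ⟨H, hidx, hmap⟩
    obtain ⟨b, a, c, hb, ha, hcOr, hH⟩ :=
      classify (by rw [hidx]; exact hn.ne') hmap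
    have hba : b * a = n := by
      rw [hH, index_Hgrp b a hb ha] at hidx
      exact hidx
    by_cases hc0 : c = 0
    · refine ⟨⟨((b, a), false), hba, by simp⟩, ?_⟩
      apply Subtype.ext
      show Hgrp b a (cval a false) = H
      rw [hH, hc0]
      rfl
    · have h2c : 2 * c = (a : ℤ) := hcOr.resolve_left hc0
      have h2a : 2 ∣ a := by omega
      refine ⟨⟨((b, a), true), hba, fun _ => h2a⟩, ?_⟩
      apply Subtype.ext
      show Hgrp b a (cval a true) = H
      have hcc : cval a true = c := by
        simp only [cval, if_true]
        omega
      rw [hcc, hH]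

def pairsEquiv (n : ℕ) (hn : 0 < n) :
    {p : ℕ × ℕ // p.1 * p.2 = n} ≃ {p : ℕ × ℕ // p ∈ n.divisorsAntidiagonal} :=
  Equiv.subtypeEquivRight (fun p => by
    rw [Nat.mem_divisorsAntidiagonal]
    exact ⟨fun h => ⟨h, hn.ne'⟩, And.left⟩)

lemma card_pairs (n : ℕ) (hn : 0 < n) :
    Nat.card {p : ℕ × ℕ // p.1 * p.2 = n} = n.divisors.card := by
  rw [Nat.card_congr (pairsEquiv n hn)]
  rw [show {p : ℕ × ℕ // p ∈ n.divisorsAntidiagonal} = ((n.divisorsAntidiagonal : Finset (ℕ × ℕ)) : Type) from rfl]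
  rw [Nat.card_eq_finsetCard]
  conv_rhs => rw [← Nat.image_fst_divisorsAntidiagonal]
  refine (Finset.card_image_of_injOn ?_).symm
  intro p hp q hq hpq
  simp only [Finset.mem_coe, Nat.mem_divisorsAntidiagonal] at hp hq
  have hp1 : p.1 ≠ 0 := by
    intro h
    rw [h, zero_mul] at hp
    exact hp.2 hp.1.symm
  have : p.2 = q.2 := by
    apply Nat.eq_of_mul_eq_mul_left (Nat.pos_of_ne_zero hp1)
    rw [hp.1, hpq, hq.1]
  exact Prod.ext hpq this

def evenPairsEquiv (n : ℕ) (h2 : 2 ∣ n) :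
    {p : ℕ × ℕ // p.1 * p.2 = n ∧ 2 ∣ p.2} ≃ {q : ℕ × ℕ // q.1 * q.2 = n / 2} where
  toFun p := ⟨(p.1.1, p.1.2 / 2), by
    obtain ⟨⟨b, a⟩, hmul, hdvd⟩ := p
    simp only
    rw [← Nat.mul_div_assoc _ hdvd, hmul]⟩
  invFun q := ⟨(q.1.1, 2 * q.1.2), by
    obtain ⟨⟨b, a⟩, hmul⟩ := q
    constructor
    · simp only
      calc b * (2 * a) = 2 * (b * a) := by ring
        _ = 2 * (n / 2) := by rw [hmul]
        _ = n := by omega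
    · exact ⟨a, rfl⟩⟩
  left_inv p := by
    obtain ⟨⟨b, a⟩, hmul, hdvd⟩ := p
    apply Subtype.ext
    simp only
    have : 2 * (a / 2) = a := by omega
    rw [this]
  right_inv q := by
    obtain ⟨⟨b, a⟩, hmul⟩ := q
    apply Subtype.ext
    simp only
    have : 2 * a / 2 = a := by omega
    rw [this]

lemma card_even_pairs (n : ℕ) (hn : 0 < n) :
    Nat.card {p : ℕ × ℕ // p.1 * p.2 = n ∧ 2 ∣ p.2} =
      if 2 ∣ n then (n / 2).divisors.card else 0 := by
  by_cases h2 : 2 ∣ n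
  · rw [if_pos h2, Nat.card_congr (evenPairsEquiv n h2), card_pairs _ (by omega)]
  · rw [if_neg h2]
    have : IsEmpty {p : ℕ × ℕ // p.1 * p.2 = n ∧ 2 ∣ p.2} := by
      constructor
      rintro ⟨⟨b, a⟩, hmul, hdvd⟩
      exact h2 (hdvd.trans (Dvd.intro_left b hmul))
    exact Nat.card_of_isEmpty

def splitEquiv (n : ℕ) : Param n ≃
    {p : ℕ × ℕ // p.1 * p.2 = n} ⊕ {p : ℕ × ℕ // p.1 * p.2 = n ∧ 2 ∣ p.2} where
  toFun p := if h : p.1.2 = true then Sum.inr ⟨p.1.1, p.2.1, p.2.2 h⟩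
    else Sum.inl ⟨p.1.1, p.2.1⟩
  invFun q := Sum.elim (fun r => ⟨(r.1, false), r.2, by simp⟩)
    (fun r => ⟨(r.1, true), r.2.1, fun _ => r.2.2⟩) q
  left_inv p := by
    obtain ⟨⟨ba, f⟩, h1, h2⟩ := p
    cases f <;> simp
  right_inv q := by
    rcases q with q | q <;> simp

theorem main (n : ℕ) (hn : 0 < n) :
    Nat.card {H : AddSubgroup (ℤ × ℤ) // H.index = n ∧ H.map ell2 = H} =
      n.divisors.card + (if 2 ∣ n then (n / 2).divisors.card else 0) := by
  rw [Nat.card_congr (Equiv.ofBijective (toH n hn) (toH_bijective n hn)).symm]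
  rw [Nat.card_congr (splitEquiv n)]
  haveI : Finite {p : ℕ × ℕ // p.1 * p.2 = n} :=
    Finite.of_equiv _ (pairsEquiv n hn).symm
  haveI : Finite {p : ℕ × ℕ // p.1 * p.2 = n ∧ 2 ∣ p.2} :=
    Finite.of_injective
      (fun q => (⟨q.1, q.2.1⟩ : {p : ℕ × ℕ // p.1 * p.2 = n}))
      (fun q1 q2 h => by
        simp only [Subtype.mk.injEq] at h
        exact Subtype.ext h)
  rw [Nat.card_sum, card_pairs n hn, card_even_pairs n hn]

end Stmt4

theorem stmt4 (n : ℕ) (hn : 0 < n) :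
    Nat.card {H : AddSubgroup (ℤ × ℤ) // H.index = n ∧ H.map ell2 = H} =
      n.divisors.card + (if 2 ∣ n then (n / 2).divisors.card else 0) :=
  Stmt4.main n hn
end

section
/- Let ℓ : ℤ³ → ℤ³ be the automorphism ℓ(u,v,w) = (u,v,-w). The number of subgroups Δ of index n in ℤ³ with ℓ(Δ) = Δ equals σ₂(n) + 3·σ₂(n/2), where σ₂(n) = Σ_{ab | factorizations abc = n} a and σ₂(n/2) = 0 if n is odd. -/
/-- `sigma2 n = ∑_{a*b*c = n} a`, summing over ordered triples of positive integers. -/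
def sigma2 (n : ℕ) : ℕ :=
  ∑ t ∈ (Finset.range (n+1) ×ˢ Finset.range (n+1) ×ˢ Finset.range (n+1)).filter
      (fun t => 0 < t.1 ∧ 0 < t.2.1 ∧ 0 < t.2.2 ∧ t.1 * t.2.1 * t.2.2 = n),
    t.1

/-- The automorphism `ℓ(u, v, w) = (u, v, -w)` of `ℤ³`, as an additive monoid hom. -/
def ell3 : ℤ × ℤ × ℤ →+ ℤ × ℤ × ℤ :=
  (AddMonoidHom.id ℤ).prodMap ((AddMonoidHom.id ℤ).prodMap negAddMonoidHom)

/-!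
Every subgroup of finite index of `ℤ³` has a unique basis in Hermite normal form
`(a, b, w₁)`, `(0, d, w₂)`, `(0, 0, c)` with `a, d, c > 0`, `0 ≤ b < d` and `0 ≤ w₁, w₂ < c`,
and its index is `a * d * c`. Since `ℓ` only negates the last coordinate, the subgroup is
`ℓ`-stable exactly when `c ∣ 2 * w₁` and `c ∣ 2 * w₂`, i.e. `w₁, w₂ ∈ {0, c / 2}`. For fixed
`(a, d, c)` there are therefore `d` subgroups when `c` is odd and `4 * d` when `c` is even, and
summing over `a * d * c = n` gives `σ₂(n) + 3 * σ₂(n / 2)`.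
-/

open Finset

theorem LinearMap.index_range_eq_natAbs_det {M : Type*} [AddCommGroup M] [Module.Free ℤ M]
    [Module.Finite ℤ M] {f : M →ₗ[ℤ] M} (hf : Function.Injective f) :
    (LinearMap.range f).toAddSubgroup.index = (LinearMap.det f).natAbs :=
  (Submodule.natAbs_det_equiv _ (LinearEquiv.ofInjective f hf)).symm

theorem AddSubgroup.exists_nat_mem_iff_dvd (K : AddSubgroup ℤ) :
    ∃ g : ℕ, ∀ x, x ∈ K ↔ (g : ℤ) ∣ x := by
  obtain ⟨g, rfl⟩ := Int.subgroup_cyclic K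
  refine ⟨g.natAbs, fun x => ?_⟩
  rw [← AddSubgroup.zmultiples_eq_closure, Int.mem_zmultiples_iff, Int.natCast_natAbs, abs_dvd]

theorem AddSubgroup.map_eq_self_of_involutive {G : Type*} [AddGroup G] {σ : G →+ G}
    (hσ : Function.Involutive σ) {H : AddSubgroup G} (h : H.map σ ≤ H) : H.map σ = H :=
  le_antisymm h fun p hp => ⟨σ p, h ⟨p, hp, rfl⟩, hσ p⟩

theorem Int.eq_of_dvd_sub_of_mem_Ico {c x y : ℤ} (hx : x ∈ Set.Ico 0 c) (hy : y ∈ Set.Ico 0 c)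
    (h : c ∣ x - y) : x = y := by
  obtain ⟨hx₀, hxc⟩ := hx
  obtain ⟨hy₀, hyc⟩ := hy
  exact sub_eq_zero.1 <| Int.eq_zero_of_abs_lt_dvd h <|
    abs_sub_lt_iff.2 ⟨by linarith, by linarith⟩

lemma ell3_apply (p : ℤ × ℤ × ℤ) : ell3 p = (p.1, p.2.1, -p.2.2) := rfl

lemma ell3_involutive : Function.Involutive ell3 := fun p => by simp [ell3_apply]

def hermiteMap (a b w₁ d w₂ c : ℤ) : ℤ × ℤ × ℤ →ₗ[ℤ] ℤ × ℤ × ℤ where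
  toFun q := (a * q.1, b * q.1 + d * q.2.1, w₁ * q.1 + w₂ * q.2.1 + c * q.2.2)
  map_add' q r := by
    simp only [Prod.fst_add, Prod.snd_add, Prod.mk_add_mk]
    ring_nf
  map_smul' k q := by
    simp only [Prod.smul_fst, Prod.smul_snd, Prod.smul_mk, smul_eq_mul, RingHom.id_apply]
    ring_nf

def hermiteLattice (a b w₁ d w₂ c : ℤ) : AddSubgroup (ℤ × ℤ × ℤ) :=
  (LinearMap.range (hermiteMap a b w₁ d w₂ c)).toAddSubgroup

section Hermite

variable {a b w₁ d w₂ c : ℤ}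

lemma hermiteMap_apply (q : ℤ × ℤ × ℤ) : hermiteMap a b w₁ d w₂ c q =
    (a * q.1, b * q.1 + d * q.2.1, w₁ * q.1 + w₂ * q.2.1 + c * q.2.2) := rfl

lemma det_hermiteMap : LinearMap.det (hermiteMap a b w₁ d w₂ c) = a * d * c := by
  let e := Module.Basis.singleton Unit ℤ
  have : LinearMap.toMatrix (e.prod (e.prod e)) (e.prod (e.prod e)) (hermiteMap a b w₁ d w₂ c) =
      Matrix.fromBlocks (Matrix.of fun _ _ => a) 0 (Matrix.of fun i _ => Sum.elim (fun _ => b)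
        (fun _ => w₁) i) (Matrix.fromBlocks (Matrix.of fun _ _ => d) 0 (Matrix.of fun _ _ => w₂)
          (Matrix.of fun _ _ => c)) := by
    ext (_ | _ | _) (_ | _ | _) <;> simp [e, LinearMap.toMatrix_apply, hermiteMap_apply]
  rw [← LinearMap.det_toMatrix (e.prod (e.prod e)), this, Matrix.det_fromBlocks_zero₁₂,
    Matrix.det_fromBlocks_zero₁₂]
  simp [mul_assoc]

lemma hermiteMap_injective (ha : a ≠ 0) (hd : d ≠ 0) (hc : c ≠ 0) :
    Function.Injective (hermiteMap a b w₁ d w₂ c) := by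
  rintro ⟨x, y, z⟩ ⟨x', y', z'⟩ h
  simp only [hermiteMap_apply, Prod.mk.injEq] at h
  obtain ⟨h₁, h₂, h₃⟩ := h
  obtain rfl : x = x' := mul_left_cancel₀ ha h₁
  obtain rfl : y = y' := mul_left_cancel₀ hd (by linarith)
  obtain rfl : z = z' := mul_left_cancel₀ hc (by linarith)
  rfl

lemma index_hermiteLattice (ha : a ≠ 0) (hd : d ≠ 0) (hc : c ≠ 0) :
    (hermiteLattice a b w₁ d w₂ c).index = (a * d * c).natAbs := by
  rw [hermiteLattice, LinearMap.index_range_eq_natAbs_det (hermiteMap_injective ha hd hc),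
    det_hermiteMap]

end Hermite

structure IsHermiteBasis (H : AddSubgroup (ℤ × ℤ × ℤ)) (a b w₁ d w₂ c : ℤ) : Prop where
  mem₁ : (a, b, w₁) ∈ H
  mem₂ : (0, d, w₂) ∈ H
  mem₃ : (0, 0, c) ∈ H
  dvd₁ : ∀ p ∈ H, a ∣ p.1
  dvd₂ : ∀ v w, (0, v, w) ∈ H → d ∣ v
  dvd₃ : ∀ w, (0, 0, w) ∈ H → c ∣ w

lemma isHermiteBasis_hermiteLattice {a b w₁ d w₂ c : ℤ} (ha : a ≠ 0) (hd : d ≠ 0) :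
    IsHermiteBasis (hermiteLattice a b w₁ d w₂ c) a b w₁ d w₂ c where
  mem₁ := ⟨(1, 0, 0), by simp [hermiteMap_apply]⟩
  mem₂ := ⟨(0, 1, 0), by simp [hermiteMap_apply]⟩
  mem₃ := ⟨(0, 0, 1), by simp [hermiteMap_apply]⟩
  dvd₁ := by
    rintro _ ⟨q, rfl⟩
    exact dvd_mul_right _ _
  dvd₂ := by
    rintro v w ⟨⟨x, y, z⟩, hq⟩
    simp only [hermiteMap_apply, Prod.mk.injEq, mul_eq_zero, ha, false_or] at hq
    obtain ⟨rfl, rfl, -⟩ := hq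
    simp
  dvd₃ := by
    rintro w ⟨⟨x, y, z⟩, hq⟩
    simp only [hermiteMap_apply, Prod.mk.injEq, mul_eq_zero, ha, false_or] at hq
    obtain ⟨rfl, hy, rfl⟩ := hq
    simp_all

namespace IsHermiteBasis

variable {H : AddSubgroup (ℤ × ℤ × ℤ)} {a b w₁ d w₂ c : ℤ}

lemma hermiteLattice_eq (h : IsHermiteBasis H a b w₁ d w₂ c) :
    hermiteLattice a b w₁ d w₂ c = H := by
  refine le_antisymm ?_ fun p hp => ?_
  · rintro _ ⟨q, rfl⟩
    have : hermiteMap a b w₁ d w₂ c q =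
        q.1 • (a, b, w₁) + q.2.1 • ((0 : ℤ), d, w₂) + q.2.2 • ((0 : ℤ), (0 : ℤ), c) := by
      ext <;> simp [hermiteMap_apply] <;> ring
    rw [this]
    exact H.add_mem (H.add_mem (H.zsmul_mem h.mem₁ _) (H.zsmul_mem h.mem₂ _)) (H.zsmul_mem h.mem₃ _)
  obtain ⟨x, hx⟩ := h.dvd₁ p hp
  have hp₂ : ((0 : ℤ), p.2.1 - x * b, p.2.2 - x * w₁) ∈ H := by
    convert H.sub_mem hp (H.zsmul_mem h.mem₁ x) using 1
    ext <;> simp [hx, mul_comm]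
  obtain ⟨y, hy⟩ := h.dvd₂ _ _ hp₂
  have hp₃ : ((0 : ℤ), (0 : ℤ), p.2.2 - x * w₁ - y * w₂) ∈ H := by
    convert H.sub_mem hp₂ (H.zsmul_mem h.mem₂ y) using 1
    ext <;> simp
    linarith
  obtain ⟨z, hz⟩ := h.dvd₃ _ hp₃
  exact ⟨(x, y, z), by ext <;> simp [hermiteMap_apply] <;> linarith⟩

lemma unique {a' b' w₁' d' w₂' c' : ℤ} (h : IsHermiteBasis H a b w₁ d w₂ c)
    (h' : IsHermiteBasis H a' b' w₁' d' w₂' c') (ha : 0 ≤ a) (ha' : 0 ≤ a')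
    (hb : b ∈ Set.Ico 0 d) (hb' : b' ∈ Set.Ico 0 d') (hw₁ : w₁ ∈ Set.Ico 0 c)
    (hw₁' : w₁' ∈ Set.Ico 0 c') (hw₂ : w₂ ∈ Set.Ico 0 c) (hw₂' : w₂' ∈ Set.Ico 0 c') :
    a = a' ∧ b = b' ∧ w₁ = w₁' ∧ d = d' ∧ w₂ = w₂' ∧ c = c' := by
  obtain rfl : a = a' := Int.dvd_antisymm ha ha' (h.dvd₁ _ h'.mem₁) (h'.dvd₁ _ h.mem₁)
  obtain rfl : d = d' := Int.dvd_antisymm (hb.1.trans hb.2.le) (hb'.1.trans hb'.2.le)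
    (h.dvd₂ _ _ h'.mem₂) (h'.dvd₂ _ _ h.mem₂)
  obtain rfl : c = c' := Int.dvd_antisymm (hw₁.1.trans hw₁.2.le) (hw₁'.1.trans hw₁'.2.le)
    (h.dvd₃ _ h'.mem₃) (h'.dvd₃ _ h.mem₃)
  obtain rfl : w₂ = w₂' := Int.eq_of_dvd_sub_of_mem_Ico hw₂ hw₂' <| h.dvd₃ _ <| by
    simpa using H.sub_mem h.mem₂ h'.mem₂
  obtain rfl : b = b' := Int.eq_of_dvd_sub_of_mem_Ico hb hb' <| h.dvd₂ _ (w₁ - w₁') <| by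
    simpa using H.sub_mem h.mem₁ h'.mem₁
  obtain rfl : w₁ = w₁' := Int.eq_of_dvd_sub_of_mem_Ico hw₁ hw₁' <| h.dvd₃ _ <| by
    simpa using H.sub_mem h.mem₁ h'.mem₁
  simp

lemma exists_reduced (h : IsHermiteBasis H a b w₁ d w₂ c) (hd : 0 < d) (hc : 0 < c) :
    ∃ b' w₁' w₂', b' ∈ Set.Ico 0 d ∧ w₁' ∈ Set.Ico 0 c ∧ w₂' ∈ Set.Ico 0 c ∧
      IsHermiteBasis H a b' w₁' d w₂' c := by
  have m₂ : ((0 : ℤ), d, w₂ % c) ∈ H := by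
    convert H.sub_mem h.mem₂ (H.zsmul_mem h.mem₃ (w₂ / c)) using 1
    ext <;> simp [Int.emod_def, mul_comm]
  set w := w₁ - b / d * (w₂ % c)
  have m₁ : (a, b % d, w) ∈ H := by
    convert H.sub_mem h.mem₁ (H.zsmul_mem m₂ (b / d)) using 1
    ext <;> simp [Int.emod_def, mul_comm, w]
  have m₁' : (a, b % d, w % c) ∈ H := by
    convert H.sub_mem m₁ (H.zsmul_mem h.mem₃ (w / c)) using 1
    ext <;> simp [Int.emod_def, mul_comm]
  exact ⟨b % d, w % c, w₂ % c, ⟨Int.emod_nonneg _ hd.ne', Int.emod_lt_of_pos _ hd⟩,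
    ⟨Int.emod_nonneg _ hc.ne', Int.emod_lt_of_pos _ hc⟩,
    ⟨Int.emod_nonneg _ hc.ne', Int.emod_lt_of_pos _ hc⟩, { h with mem₁ := m₁', mem₂ := m₂ }⟩

end IsHermiteBasis

lemma exists_isHermiteBasis {H : AddSubgroup (ℤ × ℤ × ℤ)} (hH : H.index ≠ 0) :
    ∃ a d c : ℕ, 0 < a ∧ 0 < d ∧ 0 < c ∧ ∃ b w₁ w₂ : ℤ, IsHermiteBasis H a b w₁ d w₂ c := by
  obtain ⟨a, ha⟩ := (H.map (AddMonoidHom.fst ℤ (ℤ × ℤ))).exists_nat_mem_iff_dvd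
  obtain ⟨d, hd⟩ :=
    ((H.comap (AddMonoidHom.inr ℤ (ℤ × ℤ))).map (AddMonoidHom.fst ℤ ℤ)).exists_nat_mem_iff_dvd
  obtain ⟨c, hc⟩ :=
    (H.comap ((AddMonoidHom.inr ℤ (ℤ × ℤ)).comp (AddMonoidHom.inr ℤ ℤ))).exists_nat_mem_iff_dvd
  simp only [AddSubgroup.mem_map, AddSubgroup.mem_comap, AddMonoidHom.coe_fst,
    AddMonoidHom.coe_comp, Function.comp_apply, AddMonoidHom.inr_apply, Prod.exists] at ha hd hc
  have hidx : ∀ p, (H.index : ℤ) • p ∈ H := fun p => by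
    simpa [natCast_zsmul] using H.nsmul_index_mem p
  have pos : ∀ g : ℕ, (g : ℤ) ∣ H.index → 0 < g := fun g hg =>
    Nat.pos_of_dvd_of_pos (Int.natCast_dvd_natCast.1 hg) (Nat.pos_of_ne_zero hH)
  have ha₀ : 0 < a := pos a ((ha _).1 ⟨_, 0, 0, by simpa using hidx (1, 0, 0), rfl⟩)
  have hd₀ : 0 < d := pos d ((hd _).1 ⟨_, 0, by simpa using hidx (0, 1, 0), rfl⟩)
  have hc₀ : 0 < c := pos c ((hc _).1 (by simpa using hidx (0, 0, 1)))
  obtain ⟨_, b, w₁, h₁, rfl⟩ := (ha a).2 dvd_rfl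
  obtain ⟨_, w₂, h₂, rfl⟩ := (hd d).2 dvd_rfl
  exact ⟨a, d, c, ha₀, hd₀, hc₀, b, w₁, w₂, h₁, h₂, (hc c).2 dvd_rfl,
    fun p hp => (ha _).1 ⟨_, _, _, hp, rfl⟩, fun v w hvw => (hd v).1 ⟨_, _, hvw, rfl⟩,
    fun w hw => (hc w).1 hw⟩

lemma map_ell3_hermiteLattice_eq_iff {a b w₁ d w₂ c : ℤ} (ha : a ≠ 0) (hd : d ≠ 0) :
    (hermiteLattice a b w₁ d w₂ c).map ell3 = hermiteLattice a b w₁ d w₂ c ↔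
      c ∣ 2 * w₁ ∧ c ∣ 2 * w₂ := by
  set L := hermiteLattice a b w₁ d w₂ c
  have hL := isHermiteBasis_hermiteLattice (b := b) (w₁ := w₁) (w₂ := w₂) (c := c) ha hd
  constructor
  · intro hinv
    have key : ∀ u v w, (u, v, w) ∈ L → c ∣ 2 * w := by
      intro u v w hp
      have hp' : ell3 (u, v, w) ∈ L := hinv ▸ AddSubgroup.mem_map_of_mem ell3 hp
      exact hL.dvd₃ _ (by simpa [ell3_apply, two_mul] using L.sub_mem hp hp')
    exact ⟨key _ _ _ hL.mem₁, key _ _ _ hL.mem₂⟩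
  · rintro ⟨⟨k₁, hk₁⟩, ⟨k₂, hk₂⟩⟩
    refine AddSubgroup.map_eq_self_of_involutive ell3_involutive ?_
    rintro _ ⟨_, ⟨⟨x, y, z⟩, rfl⟩, rfl⟩
    refine ⟨(x, y, -z - k₁ * x - k₂ * y), ?_⟩
    ext <;> simp [hermiteMap_apply, ell3_apply]
    linear_combination x * hk₁ + y * hk₂

def mulTriples (n : ℕ) : Finset (ℕ × ℕ × ℕ) :=
  (range (n+1) ×ˢ range (n+1) ×ˢ range (n+1)).filter
    (fun t => 0 < t.1 ∧ 0 < t.2.1 ∧ 0 < t.2.2 ∧ t.1 * t.2.1 * t.2.2 = n)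

lemma sigma2_eq_sum_mulTriples (n : ℕ) : sigma2 n = ∑ t ∈ mulTriples n, t.1 := rfl

lemma mem_mulTriples {n : ℕ} {t : ℕ × ℕ × ℕ} :
    t ∈ mulTriples n ↔ 0 < t.1 ∧ 0 < t.2.1 ∧ 0 < t.2.2 ∧ t.1 * t.2.1 * t.2.2 = n := by
  obtain ⟨x, y, z⟩ := t
  simp only [mulTriples, mem_filter, mem_product, mem_range, and_iff_right_iff_imp]
  rintro ⟨hx, hy, hz, rfl⟩
  have h0 : 0 < x * y * z := by positivity
  have : x ≤ x * y * z := Nat.le_of_dvd h0 ⟨y * z, by ring⟩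
  have : y ≤ x * y * z := Nat.le_of_dvd h0 ⟨x * z, by ring⟩
  have : z ≤ x * y * z := Nat.le_of_dvd h0 ⟨x * y, by ring⟩
  omega

lemma sum_fst_filter_mulTriples (n : ℕ) :
    ∑ t ∈ (mulTriples n).filter (fun t => 2 ∣ t.2.2), t.1 =
      if 2 ∣ n then sigma2 (n / 2) else 0 := by
  split_ifs with h
  · obtain ⟨m, rfl⟩ := h
    rw [Nat.mul_div_cancel_left m two_pos, sigma2_eq_sum_mulTriples]
    refine sum_nbij' (fun t => (t.1, t.2.1, t.2.2 / 2)) (fun t => (t.1, t.2.1, 2 * t.2.2))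
      ?_ ?_ ?_ ?_ fun _ _ => rfl
    · rintro ⟨x, y, _⟩ ht
      simp only [mem_filter, mem_mulTriples] at ht ⊢
      obtain ⟨⟨hx, hy, hz, hxyz⟩, z, rfl⟩ := ht
      rw [Nat.mul_div_cancel_left z two_pos]
      exact ⟨hx, hy, by omega, by linarith⟩
    · rintro ⟨x, y, z⟩ ht
      simp only [mem_filter, mem_mulTriples] at ht ⊢
      obtain ⟨hx, hy, hz, rfl⟩ := ht
      exact ⟨⟨hx, hy, by omega, by ring⟩, dvd_mul_right _ _⟩
    · rintro ⟨x, y, _⟩ ht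
      simp only [mem_filter] at ht
      obtain ⟨-, z, rfl⟩ := ht
      simp
    · rintro ⟨x, y, z⟩ -
      simp
  · refine sum_eq_zero fun t ht => absurd ?_ h
    simp only [mem_filter, mem_mulTriples] at ht
    obtain ⟨⟨-, -, -, rfl⟩, h2⟩ := ht
    exact dvd_mul_of_dvd_right h2 _

noncomputable def twoTorsionReps (c : ℕ) : Finset ℤ :=
  (Ico 0 (c : ℤ)).filter fun w => (c : ℤ) ∣ 2 * w

lemma mem_twoTorsionReps {c : ℕ} (hc : 0 < c) {w : ℤ} :
    w ∈ twoTorsionReps c ↔ w = 0 ∨ 2 * w = c := by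
  simp only [twoTorsionReps, mem_filter, mem_Ico]
  constructor
  · rintro ⟨⟨h0, hlt⟩, k, hk⟩
    have : 0 ≤ k := by nlinarith
    have : k < 2 := by nlinarith
    interval_cases k <;> omega
  · rintro (rfl | h)
    · simpa using hc
    · exact ⟨⟨by omega, by omega⟩, h ▸ dvd_rfl⟩

lemma card_twoTorsionReps {c : ℕ} (hc : 0 < c) :
    (twoTorsionReps c).card = if 2 ∣ c then 2 else 1 := by
  split_ifs with h
  · obtain ⟨m, rfl⟩ := h
    exact card_eq_two.2 ⟨0, m, by omega, by ext; simp [mem_twoTorsionReps hc]⟩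
  · exact card_eq_one.2 ⟨0, by ext; simp [mem_twoTorsionReps hc]; omega⟩

/-- The diagonal is listed as `(d, a, c)` so that `σ₂` sums its first entry, the number of
choices of `b`. -/
noncomputable def hermiteData (n : ℕ) : Finset (Σ _ : ℕ × ℕ × ℕ, ℤ × ℤ × ℤ) :=
  (mulTriples n).sigma fun t => Ico 0 (t.1 : ℤ) ×ˢ twoTorsionReps t.2.2 ×ˢ twoTorsionReps t.2.2

def hermiteLatticeOf (s : Σ _ : ℕ × ℕ × ℕ, ℤ × ℤ × ℤ) : AddSubgroup (ℤ × ℤ × ℤ) :=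
  hermiteLattice s.1.2.1 s.2.1 s.2.2.1 s.1.1 s.2.2.2 s.1.2.2

lemma card_hermiteData (n : ℕ) :
    (hermiteData n).card = sigma2 n + 3 * (if 2 ∣ n then sigma2 (n / 2) else 0) := by
  have fiber : ∀ t ∈ mulTriples n,
      (Ico 0 (t.1 : ℤ) ×ˢ twoTorsionReps t.2.2 ×ˢ twoTorsionReps t.2.2).card =
        t.1 + if 2 ∣ t.2.2 then 3 * t.1 else 0 := by
    intro t ht
    rw [card_product, card_product, Int.card_Ico, card_twoTorsionReps (mem_mulTriples.1 ht).2.2.1]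
    split_ifs <;> simp
    ring
  rw [hermiteData, card_sigma, sum_congr rfl fiber, sum_add_distrib, ← sum_filter, ← mul_sum,
    sum_fst_filter_mulTriples, sigma2_eq_sum_mulTriples n]

lemma mk_mem_hermiteData {n d a c : ℕ} {b w₁ w₂ : ℤ} :
    ⟨(d, a, c), (b, w₁, w₂)⟩ ∈ hermiteData n ↔
      (0 < d ∧ 0 < a ∧ 0 < c ∧ d * a * c = n) ∧ b ∈ Set.Ico 0 (d : ℤ) ∧
        (w₁ ∈ Set.Ico 0 (c : ℤ) ∧ (c : ℤ) ∣ 2 * w₁) ∧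
        (w₂ ∈ Set.Ico 0 (c : ℤ) ∧ (c : ℤ) ∣ 2 * w₂) := by
  simp [hermiteData, mem_mulTriples, twoTorsionReps]

lemma injOn_hermiteLatticeOf (n : ℕ) : Set.InjOn hermiteLatticeOf (hermiteData n) := by
  rintro ⟨⟨d, a, c⟩, b, w₁, w₂⟩ hs ⟨⟨d', a', c'⟩, b', w₁', w₂'⟩ hs' h
  obtain ⟨⟨hd, ha, -, -⟩, hb, ⟨hw₁, -⟩, hw₂, -⟩ := mk_mem_hermiteData.1 hs
  obtain ⟨⟨hd', ha', -, -⟩, hb', ⟨hw₁', -⟩, hw₂', -⟩ := mk_mem_hermiteData.1 hs'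
  have hH := isHermiteBasis_hermiteLattice (b := b) (w₁ := w₁) (w₂ := w₂) (c := c)
    (Int.natCast_ne_zero.2 ha.ne') (Int.natCast_ne_zero.2 hd.ne')
  have hH' := isHermiteBasis_hermiteLattice (b := b') (w₁ := w₁') (w₂ := w₂') (c := c')
    (Int.natCast_ne_zero.2 ha'.ne') (Int.natCast_ne_zero.2 hd'.ne')
  simp only [hermiteLatticeOf] at h
  obtain ⟨ha, rfl, rfl, hd, rfl, hc⟩ :=
    hH.unique (h ▸ hH') (by positivity) (by positivity) hb hb' hw₁ hw₁' hw₂ hw₂'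
  simp only [Nat.cast_inj] at ha hd hc
  subst ha hd hc
  rfl

theorem setOf_index_eq_and_map_ell3_eq {n : ℕ} (hn : n ≠ 0) :
    {H : AddSubgroup (ℤ × ℤ × ℤ) | H.index = n ∧ H.map ell3 = H} =
      hermiteLatticeOf '' hermiteData n := by
  ext H
  constructor
  · rintro ⟨hidx, hinv⟩
    obtain ⟨a, d, c, ha, hd, hc, _, _, _, hH⟩ := exists_isHermiteBasis (hidx ▸ hn)
    have ha' : (a : ℤ) ≠ 0 := by omega
    have hd' : (d : ℤ) ≠ 0 := by omega
    have hc' : (c : ℤ) ≠ 0 := by omega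
    obtain ⟨b, w₁, w₂, hb, hw₁, hw₂, hH⟩ := hH.exists_reduced (by omega) (by omega)
    rw [← hH.hermiteLattice_eq] at hidx hinv ⊢
    rw [index_hermiteLattice ha' hd' hc', Int.natAbs_mul, Int.natAbs_mul, Int.natAbs_natCast,
      Int.natAbs_natCast, Int.natAbs_natCast] at hidx
    obtain ⟨h₁, h₂⟩ := (map_ell3_hermiteLattice_eq_iff ha' hd').1 hinv
    exact ⟨⟨(d, a, c), (b, w₁, w₂)⟩,
      mk_mem_hermiteData.2 ⟨⟨hd, ha, hc, by rw [← hidx]; ring⟩, hb, ⟨hw₁, h₁⟩, hw₂, h₂⟩, rfl⟩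
  · rintro ⟨⟨⟨d, a, c⟩, b, w₁, w₂⟩, hs, rfl⟩
    obtain ⟨⟨hd, ha, hc, rfl⟩, -, ⟨-, h₁⟩, -, h₂⟩ := mk_mem_hermiteData.1 hs
    have ha' : (a : ℤ) ≠ 0 := by omega
    have hd' : (d : ℤ) ≠ 0 := by omega
    have hc' : (c : ℤ) ≠ 0 := by omega
    refine ⟨?_, (map_ell3_hermiteLattice_eq_iff ha' hd').2 ⟨h₁, h₂⟩⟩
    rw [hermiteLatticeOf, index_hermiteLattice ha' hd' hc']
    simp only [Int.natAbs_mul, Int.natAbs_natCast]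
    ring

theorem stmt5 (n : ℕ) (hn : 0 < n) :
    Nat.card {H : AddSubgroup (ℤ × ℤ × ℤ) // H.index = n ∧ H.map ell3 = H} =
      sigma2 n + 3 * (if 2 ∣ n then sigma2 (n / 2) else 0) := by
  rw [← card_hermiteData, ← Set.ncard_coe_finset, ← (injOn_hermiteLatticeOf n).ncard_image,
    ← setOf_index_eq_and_map_ell3_eq hn.ne']
  rfl
end

section
/- In the group G = ⟨x, y, z : xy²x⁻¹y² = yx²y⁻¹x² = xyz = 1⟩, the quotient G/⟨x², y², z²⟩ is isomorphic to the Klein four-group ℤ₂ × ℤ₂. -/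
/-!
Modulo the squares, `x`, `y`, `z` become involutions with `x y z = 1`, so `x y = z⁻¹` is an
involution as well, which forces `x` and `y` to commute. Hence `(i, j) ↦ xⁱ yʲ` is a homomorphism
from `ℤ₂ × ℤ₂` onto the quotient. In the other direction `x ↦ (1, 0)`, `y ↦ (0, 1)`, `z ↦ (1, 1)`
respects the Hantzsche–Wendt relations and kills the squares, and the two maps are mutually
inverse because they are on generators.
-/

/-- The relations of the Hantzsche–Wendt group:
`x y² x⁻¹ y² = 1`, `y x² y⁻¹ x² = 1`, `x y z = 1`, with `x, y, z` the generators `0, 1, 2`. -/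
def hwRels : Set (FreeGroup (Fin 3)) :=
  { FreeGroup.of 0 * FreeGroup.of 1 ^ 2 * (FreeGroup.of 0)⁻¹ * FreeGroup.of 1 ^ 2,
    FreeGroup.of 1 * FreeGroup.of 0 ^ 2 * (FreeGroup.of 1)⁻¹ * FreeGroup.of 0 ^ 2,
    FreeGroup.of 0 * FreeGroup.of 1 * FreeGroup.of 2 }

/-- The fundamental group of the Hantzsche–Wendt manifold `𝒢₆`. -/
abbrev HW : Type := PresentedGroup hwRels

def hwx : HW := PresentedGroup.of 0
def hwy : HW := PresentedGroup.of 1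
def hwz : HW := PresentedGroup.of 2

theorem Commute.of_sq_eq_one {M : Type*} [Monoid M] [IsCancelMul M] {a b : M}
    (ha : a ^ 2 = 1) (hb : b ^ 2 = 1) (hab : (a * b) ^ 2 = 1) : Commute a b := by
  rw [commute_iff_eq, ← mul_right_inj a, ← mul_left_inj b]
  calc a * (a * b) * b = a ^ 2 * b ^ 2 := by simp only [pow_two, mul_assoc]
    _ = (a * b) ^ 2 := by rw [ha, hb, hab, mul_one]
    _ = a * (b * a) * b := by simp only [pow_two, mul_assoc]

theorem pow_val_add {M : Type*} [Monoid M] {n : ℕ} [NeZero n] {a : M} (ha : a ^ n = 1)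
    (i j : ZMod n) : a ^ (i + j).val = a ^ i.val * a ^ j.val := by
  rw [ZMod.val_add, ← pow_eq_pow_mod _ ha, pow_add]

section ZModProd

variable {M : Type*} [Monoid M] {m n : ℕ} [NeZero m] [NeZero n] {a b : M}

def zmodProdLift (ha : a ^ m = 1) (hb : b ^ n = 1) (hab : Commute a b) :
    Multiplicative (ZMod m × ZMod n) →* M where
  toFun k := a ^ k.toAdd.1.val * b ^ k.toAdd.2.val
  map_one' := by simp
  map_mul' k l := by
    simp only [toAdd_mul, Prod.fst_add, Prod.snd_add, pow_val_add ha, pow_val_add hb]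
    exact (hab.pow_pow _ _).mul_mul_mul_comm _ _

theorem zmodProdLift_ofAdd (ha : a ^ m = 1) (hb : b ^ n = 1) (hab : Commute a b)
    (i : ZMod m) (j : ZMod n) :
    zmodProdLift ha hb hab (.ofAdd (i, j)) = a ^ i.val * b ^ j.val := rfl

theorem Multiplicative.zmodProd_eq_pow_val_mul_pow_val (k : Multiplicative (ZMod m × ZMod n)) :
    k = .ofAdd (1, 0) ^ k.toAdd.1.val * .ofAdd (0, 1) ^ k.toAdd.2.val := by
  apply Multiplicative.toAdd.injective
  ext <;> simp

theorem MonoidHom.zmodProd_ext {f g : Multiplicative (ZMod m × ZMod n) →* M}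
    (h₁ : f (.ofAdd (1, 0)) = g (.ofAdd (1, 0))) (h₂ : f (.ofAdd (0, 1)) = g (.ofAdd (0, 1))) :
    f = g :=
  MonoidHom.ext fun k => by
    rw [Multiplicative.zmodProd_eq_pow_val_mul_pow_val k]
    simp only [map_mul, map_pow, h₁, h₂]

end ZModProd

namespace HantzscheWendt

open Multiplicative

abbrev squares : Subgroup HW := Subgroup.normalClosure {hwx ^ 2, hwy ^ 2, hwz ^ 2}

theorem hwx_mul_hwy_mul_hwz : hwx * hwy * hwz = 1 :=
  PresentedGroup.one_of_mem (by simp [hwRels])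

theorem coe_sq_eq_one {g : HW} (hg : g ∈ ({hwx, hwy, hwz} : Set HW)) :
    (g : HW ⧸ squares) ^ 2 = 1 := by
  rw [← QuotientGroup.mk_pow, QuotientGroup.eq_one_iff]
  apply Subgroup.subset_normalClosure
  rcases hg with rfl | rfl | rfl <;> simp

theorem coe_hwz_eq_inv : (hwz : HW ⧸ squares) = ((hwx : HW ⧸ squares) * hwy)⁻¹ :=
  eq_inv_of_mul_eq_one_right (congrArg _ hwx_mul_hwy_mul_hwz)

theorem coe_hwx_mul_hwy_sq : ((hwx : HW ⧸ squares) * hwy) ^ 2 = 1 := by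
  rw [← inv_eq_one, ← inv_pow, ← coe_hwz_eq_inv]
  exact coe_sq_eq_one (by simp)

theorem coe_hwz_eq : (hwz : HW ⧸ squares) = (hwx : HW ⧸ squares) * hwy := by
  rw [coe_hwz_eq_inv, inv_eq_of_mul_eq_one_right (by rw [← pow_two, coe_hwx_mul_hwy_sq])]

theorem commute_coe_hwx_hwy : Commute (hwx : HW ⧸ squares) hwy :=
  .of_sq_eq_one (coe_sq_eq_one (by simp)) (coe_sq_eq_one (by simp))
    coe_hwx_mul_hwy_sq

def genToKlein : Fin 3 → Multiplicative (ZMod 2 × ZMod 2) :=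
  ![ofAdd (1, 0), ofAdd (0, 1), ofAdd (1, 1)]

theorem genToKlein_rels : ∀ r ∈ hwRels, FreeGroup.lift genToKlein r = 1 := by
  rintro r (rfl | rfl | rfl) <;> simp [genToKlein] <;> decide

def toKlein : HW ⧸ squares →* Multiplicative (ZMod 2 × ZMod 2) :=
  QuotientGroup.lift squares (PresentedGroup.toGroup genToKlein_rels) <|
    Subgroup.normalClosure_le_normal <| by
      rintro g (rfl | rfl | rfl) <;> simp [hwx, hwy, hwz, genToKlein] <;> decide

def ofKlein : Multiplicative (ZMod 2 × ZMod 2) →* HW ⧸ squares :=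
  zmodProdLift (coe_sq_eq_one (by simp)) (coe_sq_eq_one (by simp)) commute_coe_hwx_hwy

theorem toKlein_coe_hwx : toKlein hwx = ofAdd (1, 0) := rfl

theorem toKlein_coe_hwy : toKlein hwy = ofAdd (0, 1) := rfl

theorem ofKlein_ofAdd_one_zero : ofKlein (ofAdd (1, 0)) = hwx := by
  simp [ofKlein, zmodProdLift_ofAdd, ZMod.val_one]

theorem ofKlein_ofAdd_zero_one : ofKlein (ofAdd (0, 1)) = hwy := by
  simp [ofKlein, zmodProdLift_ofAdd, ZMod.val_one]

theorem ofKlein_comp_toKlein : ofKlein.comp toKlein = .id _ := by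
  refine QuotientGroup.monoidHom_ext _ <| PresentedGroup.ext fun i => ?_
  fin_cases i
  · exact congrArg ofKlein toKlein_coe_hwx |>.trans ofKlein_ofAdd_one_zero
  · exact congrArg ofKlein toKlein_coe_hwy |>.trans ofKlein_ofAdd_zero_one
  · show ofKlein (toKlein hwz) = hwz
    rw [coe_hwz_eq, map_mul, map_mul, toKlein_coe_hwx, toKlein_coe_hwy, ofKlein_ofAdd_one_zero,
      ofKlein_ofAdd_zero_one]

theorem toKlein_comp_ofKlein : toKlein.comp ofKlein = .id _ :=
  MonoidHom.zmodProd_ext (congrArg toKlein ofKlein_ofAdd_one_zero)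
    (congrArg toKlein ofKlein_ofAdd_zero_one)

def quotientSquaresMulEquiv : HW ⧸ squares ≃* Multiplicative (ZMod 2 × ZMod 2) :=
  toKlein.toMulEquiv ofKlein ofKlein_comp_toKlein toKlein_comp_ofKlein

end HantzscheWendt

theorem stmt8 :
    Nonempty ((HW ⧸ Subgroup.normalClosure {hwx ^ 2, hwy ^ 2, hwz ^ 2}) ≃*
      Multiplicative (ZMod 2 × ZMod 2)) :=
  ⟨HantzscheWendt.quotientSquaresMulEquiv⟩
end

section
/- In the group G = ⟨x, y, z : xy²x⁻¹y² = yx²y⁻¹x² = xyz = 1⟩, the relations xz²x⁻¹z² = 1, yz²y⁻¹z² = 1, zx²z⁻¹x² = 1, and zy²z⁻¹y² = 1 are consequences of the defining relations. -/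
private lemma conj_inv_conj {G : Type*} [Group G] (g v : G) (h : g * v * g⁻¹ = v⁻¹) :
    g⁻¹ * v * g = v⁻¹ := by
  have h2 : v * g = g * v⁻¹ := by
    calc v * g = (v⁻¹)⁻¹ * g := by rw [inv_inv]
      _ = (g * v * g⁻¹)⁻¹ * g := by rw [h]
      _ = g * v⁻¹ := by group
  calc g⁻¹ * v * g = g⁻¹ * (v * g) := by rw [mul_assoc]
    _ = g⁻¹ * (g * v⁻¹) := by rw [h2]
    _ = v⁻¹ := by group

private lemma hw_abstract {G : Type*} [Group G] (a b c : G)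
    (h1 : a * b ^ 2 * a⁻¹ * b ^ 2 = 1) (h2 : b * a ^ 2 * b⁻¹ * a ^ 2 = 1)
    (h3 : a * b * c = 1) :
    a * c ^ 2 * a⁻¹ * c ^ 2 = 1 ∧ b * c ^ 2 * b⁻¹ * c ^ 2 = 1 ∧
      c * a ^ 2 * c⁻¹ * a ^ 2 = 1 ∧ c * b ^ 2 * c⁻¹ * b ^ 2 = 1 := by
  have hc : c = (a * b)⁻¹ := eq_inv_of_mul_eq_one_right h3
  have hc2 : c ^ 2 = (a * b)⁻¹ * (a * b)⁻¹ := by rw [hc, sq]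
  have k1 : a * b ^ 2 * a⁻¹ = (b ^ 2)⁻¹ := eq_inv_of_mul_eq_one_left h1
  have k2 : b * a ^ 2 * b⁻¹ = (a ^ 2)⁻¹ := eq_inv_of_mul_eq_one_left h2
  have F3 : a⁻¹ * b ^ 2 * a = (b ^ 2)⁻¹ := conj_inv_conj a (b ^ 2) k1
  have F4 : b⁻¹ * a ^ 2 * b = (a ^ 2)⁻¹ := conj_inv_conj b (a ^ 2) k2
  have F4' : b⁻¹ * (a ^ 2)⁻¹ * b = a ^ 2 := by
    calc b⁻¹ * (a ^ 2)⁻¹ * b = (b⁻¹ * a ^ 2 * b)⁻¹ := by group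
      _ = ((a ^ 2)⁻¹)⁻¹ := by rw [F4]
      _ = a ^ 2 := by group
  refine ⟨?_, ?_, ?_, ?_⟩
  · calc a * c ^ 2 * a⁻¹ * c ^ 2
        = (a * b⁻¹ * a⁻¹) * (b⁻¹ * (a ^ 2)⁻¹ * b) * (b⁻¹ * b⁻¹ * a⁻¹ * b⁻¹ * a⁻¹) := by
          rw [hc2]; group
      _ = (a * b⁻¹ * a⁻¹) * a ^ 2 * (b⁻¹ * b⁻¹ * a⁻¹ * b⁻¹ * a⁻¹) := by rw [F4']
      _ = (a * b⁻¹ * a) * (b ^ 2)⁻¹ * (a⁻¹ * b⁻¹ * a⁻¹) := by group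
      _ = (a * b⁻¹ * a) * (a⁻¹ * b ^ 2 * a) * (a⁻¹ * b⁻¹ * a⁻¹) := by rw [F3]
      _ = 1 := by group
  · calc b * c ^ 2 * b⁻¹ * c ^ 2
        = (a⁻¹ * b⁻¹ * a⁻¹) * (b ^ 2)⁻¹ * (a⁻¹ * b⁻¹ * a⁻¹) := by rw [hc2]; group
      _ = (a⁻¹ * b⁻¹ * a⁻¹) * (a⁻¹ * b ^ 2 * a) * (a⁻¹ * b⁻¹ * a⁻¹) := by rw [F3]
      _ = (a⁻¹ * b⁻¹) * (b * a ^ 2 * b⁻¹) * (b * a⁻¹) := by rw [k2]; group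
      _ = 1 := by group
  · calc c * a ^ 2 * c⁻¹ * a ^ 2 = (b⁻¹ * a ^ 2 * b) * a ^ 2 := by rw [hc]; group
      _ = (a ^ 2)⁻¹ * a ^ 2 := by rw [F4]
      _ = 1 := by group
  · calc c * b ^ 2 * c⁻¹ * b ^ 2 = b⁻¹ * (a⁻¹ * b ^ 2 * a) * b * b ^ 2 := by rw [hc]; group
      _ = b⁻¹ * (b ^ 2)⁻¹ * b * b ^ 2 := by rw [F3]
      _ = 1 := by group

theorem stmt10 :
    hwx * hwz ^ 2 * hwx⁻¹ * hwz ^ 2 = 1 ∧ hwy * hwz ^ 2 * hwy⁻¹ * hwz ^ 2 = 1 ∧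
      hwz * hwx ^ 2 * hwz⁻¹ * hwx ^ 2 = 1 ∧ hwz * hwy ^ 2 * hwz⁻¹ * hwy ^ 2 = 1 := by
  have key : ∀ r ∈ hwRels, PresentedGroup.mk hwRels r = 1 := fun r hr =>
    (QuotientGroup.eq_one_iff r).mpr (Subgroup.subset_normalClosure hr)
  have h1 : hwx * hwy ^ 2 * hwx⁻¹ * hwy ^ 2 = 1 := by
    have := key _ (show _ ∈ hwRels from Or.inl rfl)
    simpa [hwx, hwy, PresentedGroup.of, map_mul, map_pow, map_inv] using this
  have h2 : hwy * hwx ^ 2 * hwy⁻¹ * hwx ^ 2 = 1 := by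
    have := key _ (show _ ∈ hwRels from Or.inr (Or.inl rfl))
    simpa [hwx, hwy, PresentedGroup.of, map_mul, map_pow, map_inv] using this
  have h3 : hwx * hwy * hwz = 1 := by
    have := key _ (show _ ∈ hwRels from Or.inr (Or.inr rfl))
    simpa [hwx, hwy, hwz, PresentedGroup.of, map_mul] using this
  exact hw_abstract hwx hwy hwz h1 h2 h3
end
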